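/- arXiv:2403.18718 — 7 statements merged into one kernel-verified Lean document; each statement's English description precedes it below -/
import Mathlib

section
/- For the symbol m_T(ξ) = √(tanh(ξ)(1 + Tξ²)/ξ) with T ≥ 1/3, the minimum of m_T over ℝ is attained at ξ = 0 with value 1; in particular m_T(ξ) ≥ 1 for all ξ ∈ ℝ. -/
open Real

lemma key (x : ℝ) (hx : 0 ≤ x) : x^2 + 3*x + 3 ≤ Real.exp (2*x) * (x^2 - 3*x + 3) := by
  have h := Real.sum_le_exp_of_nonneg (by positivity : (0:ℝ) ≤ 2*x) 6
  simp [Finset.sum_range_succ, Nat.factorial] at h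
  have hpos : (0:ℝ) ≤ x^2 - 3*x + 3 := by nlinarith [sq_nonneg (x - 3/2)]
  nlinarith [mul_le_mul_of_nonneg_right h hpos, mul_nonneg (pow_nonneg hx 5) (sq_nonneg (4*x-1)), pow_nonneg hx 5]

lemma key2 (T : ℝ) (hT : 1 / 3 ≤ T) (x : ℝ) (hx : 0 < x) :
    1 ≤ Real.tanh x * (1 + T * x ^ 2) / x := by
  rw [Real.tanh_eq_sinh_div_cosh, Real.sinh_eq, Real.cosh_eq, one_le_div hx]
  set u := Real.exp x with hu
  have hup : 0 < u := Real.exp_pos x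
  have hu1 : 1 ≤ u := Real.one_le_exp hx.le
  have hinv : Real.exp (-x) = u⁻¹ := Real.exp_neg x
  have hE : Real.exp (2*x) = u * u := by rw [hu, ← Real.exp_add]; ring_nf
  have h1 := key x hx.le
  rw [hE] at h1
  rw [hinv]
  have h3 : (u - u⁻¹)/2/((u + u⁻¹)/2) = (u*u - 1)/(u*u + 1) := by
    rw [div_div_div_eq]
    rw [div_eq_div_iff (by positivity) (by positivity)]
    field_simp
  rw [h3, div_mul_eq_mul_div, le_div_iff₀ (by positivity)]
  have hTT : 0 ≤ T - 1/3 := by linarith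
  have huu : 0 ≤ u*u - 1 := by nlinarith
  nlinarith [h1, mul_nonneg (mul_nonneg hTT huu) (sq_nonneg x)]

/-- for T ≥ 1/3, the capillary-gravity Whitham symbol
m_T(ξ) = √(tanh(ξ)(1+Tξ²)/ξ) (with m_T(0) = 1) attains its minimum 1 at ξ = 0,
i.e. m_T(ξ) ≥ 1 for all ξ. -/
theorem stmt3 (T : ℝ) (hT : 1 / 3 ≤ T)
    (mT : ℝ → ℝ)
    (hm : ∀ ξ : ℝ, ξ ≠ 0 → mT ξ = Real.sqrt (Real.tanh ξ * (1 + T * ξ ^ 2) / ξ))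
    (hm0 : mT 0 = 1) :
    ∀ ξ : ℝ, 1 ≤ mT ξ := by
  intro ξ
  rcases lt_trichotomy ξ 0 with hneg | rfl | hpos
  · rw [hm ξ hneg.ne]
    apply Real.one_le_sqrt.mpr
    have h := key2 T hT (-ξ) (by linarith)
    rw [Real.tanh_neg] at h
    have : Real.tanh (-ξ) * (1 + T * (-ξ) ^ 2) / (-ξ)
        = Real.tanh ξ * (1 + T * ξ ^ 2) / ξ := by
      rw [Real.tanh_neg]
      ring
    calc (1:ℝ) ≤ Real.tanh (-ξ) * (1 + T * (-ξ) ^ 2) / (-ξ) := key2 T hT (-ξ) (by linarith)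
      _ = Real.tanh ξ * (1 + T * ξ ^ 2) / ξ := this
  · rw [hm0]
  · rw [hm ξ hpos.ne']
    exact Real.one_le_sqrt.mpr (key2 T hT ξ hpos)
end

section
/- For all real ξ and all real a with |a| < π/2, (1 − |cos(2a)|)/(1 + |cos(2a)|) ≤ |tanh(ξ + ia)|² ≤ (1 + |cos(2a)|)/(1 − |cos(2a)|). -/
/-!
Writing `z = ξ + a i`, one has `|sinh z|² = (cosh 2ξ - cos 2a) / 2` and
`|cosh z|² = (cosh 2ξ + cos 2a) / 2`, so `|tanh z|² = (X - c) / (X + c)` with `X = cosh 2ξ ≥ 1`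
and `c = cos 2a`. After clearing denominators both bounds reduce to `±c ≤ |c| ≤ X |c|`.
-/

open Real

namespace Complex

lemma normSq_sinh_add_mul_I (x y : ℝ) :
    normSq (sinh (x + y * I)) = (Real.cosh (2 * x) - Real.cos (2 * y)) / 2 := by
  have h : sinh (x + y * I) =
      (Real.sinh x * Real.cos y : ℝ) + (Real.cosh x * Real.sin y : ℝ) * I := by
    rw [sinh_add, sinh_mul_I, cosh_mul_I]
    push_cast
    ring
  rw [h, normSq_add_mul_I, Real.cosh_two_mul, Real.cos_two_mul]
  linear_combination Real.cosh x ^ 2 * Real.sin_sq_add_cos_sq y +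
    (1 / 2 - Real.cos y ^ 2) * Real.cosh_sq_sub_sinh_sq x

lemma normSq_cosh_add_mul_I (x y : ℝ) :
    normSq (cosh (x + y * I)) = (Real.cosh (2 * x) + Real.cos (2 * y)) / 2 := by
  have h : cosh (x + y * I) =
      (Real.cosh x * Real.cos y : ℝ) + (Real.sinh x * Real.sin y : ℝ) * I := by
    rw [cosh_add, sinh_mul_I, cosh_mul_I]
    push_cast
    ring
  rw [h, normSq_add_mul_I, Real.cosh_two_mul, Real.cos_two_mul]
  linear_combination Real.sinh x ^ 2 * Real.sin_sq_add_cos_sq y +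
    (Real.cos y ^ 2 - 1 / 2) * Real.cosh_sq_sub_sinh_sq x

/-- Where `cosh (x + y * I) = 0`, both sides are junk zeros. -/
lemma sq_norm_tanh_add_mul_I (x y : ℝ) :
    ‖tanh (x + y * I)‖ ^ 2 =
      (Real.cosh (2 * x) - Real.cos (2 * y)) / (Real.cosh (2 * x) + Real.cos (2 * y)) := by
  rw [tanh, norm_div, div_pow, Complex.sq_norm, Complex.sq_norm, normSq_sinh_add_mul_I,
    normSq_cosh_add_mul_I]
  exact div_div_div_cancel_right₀ two_ne_zero _ _

end Complex

section

variable {X c : ℝ}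

lemma add_nonneg_of_one_le_of_abs_le_one (hX : 1 ≤ X) (hc : |c| ≤ 1) : 0 ≤ X + c := by
  linarith [neg_abs_le c]

lemma one_sub_abs_div_one_add_abs_le (hX : 1 ≤ X) (hc : |c| ≤ 1) :
    (1 - |c|) / (1 + |c|) ≤ (X - c) / (X + c) := by
  rcases (add_nonneg_of_one_le_of_abs_le_one hX hc).eq_or_lt with h | h
  · rw [← h, div_zero]
    exact div_nonpos_of_nonpos_of_nonneg (by rw [abs_of_neg (by linarith)]; linarith)
      (by positivity)
  · rw [div_le_div_iff₀ (by positivity) h]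
    nlinarith [le_abs_self c, mul_le_mul_of_nonneg_right hX (abs_nonneg c)]

lemma one_sub_abs_mul_sub_div_add_le (hX : 1 ≤ X) (hc : |c| ≤ 1) :
    (1 - |c|) * ((X - c) / (X + c)) ≤ 1 + |c| := by
  rcases (add_nonneg_of_one_le_of_abs_le_one hX hc).eq_or_lt with h | h
  · rw [← h, div_zero, mul_zero]
    positivity
  · rw [mul_div_assoc', div_le_iff₀ h]
    nlinarith [neg_abs_le c, mul_le_mul_of_nonneg_right hX (abs_nonneg c)]

end

theorem stmt7_general (ξ a : ℝ) :
    (1 - |Real.cos (2 * a)|) / (1 + |Real.cos (2 * a)|) ≤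
        ‖Complex.tanh ((ξ : ℂ) + (a : ℂ) * Complex.I)‖ ^ 2 ∧
      (1 - |Real.cos (2 * a)|) *
          ‖Complex.tanh ((ξ : ℂ) + (a : ℂ) * Complex.I)‖ ^ 2 ≤
        1 + |Real.cos (2 * a)| := by
  rw [Complex.sq_norm_tanh_add_mul_I]
  exact ⟨one_sub_abs_div_one_add_abs_le (one_le_cosh _) (abs_cos_le_one _),
    one_sub_abs_mul_sub_div_add_le (one_le_cosh _) (abs_cos_le_one _)⟩

/-- for |a| < π/2,
(1−|cos 2a|)/(1+|cos 2a|) ≤ |tanh(ξ+ia)|² and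
(1−|cos 2a|)·|tanh(ξ+ia)|² ≤ 1+|cos 2a| (the upper bound stated in
denominator-free form). -/
theorem stmt7 (ξ a : ℝ) (ha : |a| < π / 2) :
    (1 - |Real.cos (2 * a)|) / (1 + |Real.cos (2 * a)|) ≤
        ‖Complex.tanh ((ξ : ℂ) + (a : ℂ) * Complex.I)‖ ^ 2 ∧
      (1 - |Real.cos (2 * a)|) *
          ‖Complex.tanh ((ξ : ℂ) + (a : ℂ) * Complex.I)‖ ^ 2 ≤
        1 + |Real.cos (2 * a)| :=
  stmt7_general ξ a
end

section
/- For every s > 0 and 0 < x, the sum Σ_{n=1}^∞ (nπ − π/2)^{−1/2} e^{−(nπ−π/2)x} is bounded above both by e^{−πx/2}(√(2/π) + 1/√(πx)) and by √(2/π) · e^{−πx/2}/(1 − e^{−πx}). -/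
/-!
Write `tₙ = (n + 1/2)π`, so the series is `∑ₙ e^{-tₙ x} / √tₙ` with `e^{-tₙ x} = e^{-πx/2} qⁿ`,
`q = e^{-πx}`. Since `tₙ ≥ π/2`, each term is at most `√(2/π) e^{-πx/2} qⁿ`, which gives the
geometric bound and, for `n = 0`, the first summand of the other bound. For `n ≥ 1` we have
`tₙ ≥ nπ`, so the tail is at most `e^{-πx/2} π^{-1/2} ∑_{n ≥ 1} e^{-nπx} / √n`, and since
`t ↦ e^{-rt} / √t` is decreasing this sum is at most `∫₀^∞ e^{-rt} / √t dt = √(π / r)`.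
-/

open Real MeasureTheory Set

/-- Unlike `AntitoneOn.sum_le_integral`, this asks nothing of `f` at `0`, where `t ↦ t^{-1/2}`
takes the junk value `0`. -/
theorem AntitoneOn.sum_range_le_setIntegral_Ioi {f : ℝ → ℝ} (anti : AntitoneOn f (Ioi 0))
    (integrable : IntegrableOn f (Ioi 0)) (nonneg : ∀ t ∈ Ioi 0, 0 ≤ f t) (N : ℕ) :
    ∑ n ∈ Finset.range N, f (n + 1) ≤ ∫ t in Ioi 0, f t := by
  have hint : ∀ n : ℕ, IntervalIntegrable f volume n (n + 1 : ℕ) := fun n =>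
    ⟨integrable.mono_set fun _ ht => (Nat.cast_nonneg _).trans_lt ht.1,
      integrable.mono_set fun _ ht => (Nat.cast_nonneg _).trans_lt ht.1⟩
  calc ∑ n ∈ Finset.range N, f (n + 1)
      ≤ ∑ n ∈ Finset.range N, ∫ t in (n : ℝ)..(n + 1 : ℕ), f t := by
        gcongr with n
        have hle : (n : ℝ) ≤ (n + 1 : ℕ) := by push_cast; linarith
        calc f (n + 1) = ∫ _ in (n : ℝ)..(n + 1 : ℕ), f (n + 1) := by simp
          _ ≤ ∫ t in (n : ℝ)..(n + 1 : ℕ), f t :=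
            intervalIntegral.integral_mono_on_of_le_Ioo hle intervalIntegrable_const (hint n)
              fun t ht => anti ((Nat.cast_nonneg n).trans_lt ht.1)
                (by positivity : (0 : ℝ) < n + 1) (by exact_mod_cast ht.2.le)
    _ = ∫ t in (0 : ℕ)..(N : ℕ), f t :=
        intervalIntegral.sum_integral_adjacent_intervals fun n _ => hint n
    _ = ∫ t in Ioc 0 (N : ℝ), f t := by
        rw [Nat.cast_zero, intervalIntegral.integral_of_le (Nat.cast_nonneg N)]
    _ ≤ ∫ t in Ioi 0, f t :=
        setIntegral_mono_set integrable
          ((ae_restrict_iff' measurableSet_Ioi).2 (ae_of_all _ nonneg))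
          Ioc_subset_Ioi_self.eventuallyLE

theorem integral_exp_neg_mul_div_sqrt_Ioi {r : ℝ} (hr : 0 < r) :
    ∫ t in Ioi 0, exp (-(r * t)) / √t = √π / √r := by
  have h := integral_rpow_mul_exp_neg_mul_Ioi (a := 1 / 2) one_half_pos hr
  rw [Gamma_one_half_eq, ← sqrt_eq_rpow, sqrt_div' _ hr.le, sqrt_one, div_mul_eq_mul_div,
    one_mul] at h
  rw [← h]
  refine setIntegral_congr_fun measurableSet_Ioi fun t ht => ?_
  rw [show (1 / 2 : ℝ) - 1 = -(1 / 2) by norm_num, rpow_neg (le_of_lt ht), ← sqrt_eq_rpow,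
    div_eq_inv_mul]

theorem integrableOn_exp_neg_mul_div_sqrt_Ioi {r : ℝ} (hr : 0 < r) :
    IntegrableOn (fun t => exp (-(r * t)) / √t) (Ioi 0) :=
  .of_integral_ne_zero (by rw [integral_exp_neg_mul_div_sqrt_Ioi hr]; positivity)

theorem antitoneOn_exp_neg_mul_div_sqrt {r : ℝ} (hr : 0 ≤ r) :
    AntitoneOn (fun t => exp (-(r * t)) / √t) (Ioi 0) := fun s hs t _ hst => by
  dsimp only
  gcongr
  exact sqrt_pos.2 hs

theorem sum_range_exp_neg_mul_div_sqrt_le {r : ℝ} (hr : 0 < r) (N : ℕ) :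
    ∑ n ∈ Finset.range N, exp (-(r * (n + 1))) / √(n + 1) ≤ √π / √r := by
  rw [← integral_exp_neg_mul_div_sqrt_Ioi hr]
  exact (antitoneOn_exp_neg_mul_div_sqrt hr.le).sum_range_le_setIntegral_Ioi
    (integrableOn_exp_neg_mul_div_sqrt_Ioi hr) (fun t _ => by positivity) N

theorem exp_div_sqrt_le_geometric (x : ℝ) (n : ℕ) :
    exp (-((((n : ℝ) + 1) * π - π / 2) * x)) / √(((n : ℝ) + 1) * π - π / 2) ≤
      √(2 / π) * exp (-(π * x) / 2) * exp (-(π * x)) ^ n := by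
  have hexp : exp (-((((n : ℝ) + 1) * π - π / 2) * x)) =
      exp (-(π * x) / 2) * exp (-(π * x)) ^ n := by
    rw [← exp_nat_mul, ← exp_add]; ring_nf
  have hsqrt : √(2 / π) = 1 / √(π / 2) := by
    rw [sqrt_div' _ pi_pos.le, sqrt_div' _ zero_le_two]; field_simp
  calc _ ≤ exp (-((((n : ℝ) + 1) * π - π / 2) * x)) / √(π / 2) := by
        gcongr
        nlinarith [pi_pos, (Nat.cast_nonneg n : (0 : ℝ) ≤ n)]
    _ = _ := by rw [hexp, hsqrt]; ring

theorem exp_div_sqrt_succ_le (x : ℝ) (n : ℕ) :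
    exp (-(((((n + 1 : ℕ) : ℝ) + 1) * π - π / 2) * x)) /
        √((((n + 1 : ℕ) : ℝ) + 1) * π - π / 2) ≤
      exp (-(π * x) / 2) / √π * (exp (-(π * x * (n + 1))) / √(n + 1)) := by
  have hexp : exp (-(((((n + 1 : ℕ) : ℝ) + 1) * π - π / 2) * x)) =
      exp (-(π * x) / 2) * exp (-(π * x * (n + 1))) := by
    rw [← exp_add]; push_cast; ring_nf
  calc _ ≤ exp (-(((((n + 1 : ℕ) : ℝ) + 1) * π - π / 2) * x)) / √(π * (n + 1)) := by
        gcongr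
        push_cast
        nlinarith [pi_pos]
    _ = _ := by rw [hexp, sqrt_mul pi_pos.le]; ring

/-- for x > 0, Σ_{n≥1} (nπ − π/2)^{−1/2} e^{−(nπ−π/2)x} is bounded by
e^{−πx/2}(√(2/π) + 1/√(πx)) and by √(2/π)·e^{−πx/2}/(1 − e^{−πx}). -/
theorem stmt10 (x : ℝ) (hx : 0 < x) :
    (∑' n : ℕ, Real.exp (-((((n : ℝ) + 1) * π - π / 2) * x)) /
          Real.sqrt (((n : ℝ) + 1) * π - π / 2) ≤
        Real.exp (-(π * x) / 2) * (Real.sqrt (2 / π) + 1 / Real.sqrt (π * x))) ∧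
      ∑' n : ℕ, Real.exp (-((((n : ℝ) + 1) * π - π / 2) * x)) /
          Real.sqrt (((n : ℝ) + 1) * π - π / 2) ≤
        Real.sqrt (2 / π) * (Real.exp (-(π * x) / 2) / (1 - Real.exp (-(π * x)))) := by
  set f : ℕ → ℝ := fun n => exp (-((((n : ℝ) + 1) * π - π / 2) * x)) /
    √(((n : ℝ) + 1) * π - π / 2)
  have hr : 0 < π * x := mul_pos pi_pos hx
  have hq : exp (-(π * x)) < 1 := exp_lt_one_iff.2 (neg_neg_of_pos hr)
  have hgeom := (summable_geometric_of_lt_one (exp_nonneg _) hq).mul_left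
    (√(2 / π) * exp (-(π * x) / 2))
  have hsum : Summable f :=
    hgeom.of_nonneg_of_le (fun n => by positivity) (exp_div_sqrt_le_geometric x)
  refine ⟨?_, ?_⟩
  · have hhead : f 0 ≤ exp (-(π * x) / 2) * √(2 / π) :=
      (exp_div_sqrt_le_geometric x 0).trans_eq (by ring)
    have htail : ∑' n, f (n + 1) ≤ exp (-(π * x) / 2) / √π * (√π / √(π * x)) :=
      Real.tsum_le_of_sum_range_le (fun n => by positivity) fun N => by
        grw [Finset.sum_le_sum fun n _ => exp_div_sqrt_succ_le x n, ← Finset.mul_sum,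
          sum_range_exp_neg_mul_div_sqrt_le hr N]
    rw [hsum.tsum_eq_zero_add]
    grw [hhead, htail]
    exact le_of_eq (by field_simp)
  · calc ∑' n, f n ≤ ∑' n : ℕ, √(2 / π) * exp (-(π * x) / 2) * exp (-(π * x)) ^ n :=
          hsum.tsum_le_tsum (exp_div_sqrt_le_geometric x) hgeom
      _ = √(2 / π) * (exp (-(π * x) / 2) / (1 - exp (-(π * x)))) := by
          rw [tsum_mul_left, tsum_geometric_of_lt_one (exp_nonneg _) hq]; ring
end

section
/- For T > 0 and all x ≠ 0, the function g_1(x) = (1/(π√T)) ∫_1^∞ e^{−|x|s/√T}/√(s²−1) ds satisfies g_1(x) ≤ e^{−|x|/√T}/√(2π√T |x|). -/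
/-! Since `s ^ 2 - 1 = (s - 1) (s + 1) ≥ 2 (s - 1)` on `(1, ∞)`, the integral is at most
`∫₁^∞ e^{-λs} / √(2 (s - 1)) ds` with `λ = |x| / √T`. The substitution `s = u + 1` turns
this into `e^{-λ} / √2` times the Gamma integral
`∫₀^∞ e^{-λu} u^{-1/2} du = Γ(1/2) λ^{-1/2} = √(π / λ)`. -/

open Real MeasureTheory Set

section

variable {E : Type*} [NormedAddCommGroup E]

lemma preimage_Ioi_add_right (a c : ℝ) : (· + c) ⁻¹' Ioi (a + c) = Ioi a := by
  rw [preimage_add_const_Ioi, add_sub_cancel_right]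

lemma integrableOn_Ioi_comp_add_right_iff {f : ℝ → E} (a c : ℝ) :
    IntegrableOn (fun u => f (u + c)) (Ioi a) ↔ IntegrableOn f (Ioi (a + c)) := by
  rw [← preimage_Ioi_add_right a c]
  exact (measurePreserving_add_right volume c).integrableOn_comp_preimage
    (measurableEmbedding_addRight c)

lemma setIntegral_Ioi_comp_add_right [NormedSpace ℝ E] (f : ℝ → E) (a c : ℝ) :
    ∫ u in Ioi a, f (u + c) = ∫ s in Ioi (a + c), f s := by
  rw [← preimage_Ioi_add_right a c]
  exact (measurePreserving_add_right volume c).setIntegral_preimage_emb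
    (measurableEmbedding_addRight c) f _

end

lemma rpow_one_half_sub_one_eq_inv_sqrt {u : ℝ} (hu : 0 ≤ u) :
    u ^ (1 / 2 - 1 : ℝ) = (√u)⁻¹ := by
  rw [show (1 / 2 - 1 : ℝ) = -(1 / 2) by norm_num, rpow_neg hu, ← sqrt_eq_rpow]

lemma integrableOn_exp_neg_mul_div_sqrt {l : ℝ} (hl : 0 < l) :
    IntegrableOn (fun u => exp (-(l * u)) / √u) (Ioi 0) := by
  refine (integrableOn_rpow_mul_exp_neg_mul_rpow (p := 1) (s := 1 / 2 - 1) (by norm_num)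
    one_pos hl).congr_fun (fun u hu => ?_) measurableSet_Ioi
  simp only [rpow_one]
  rw [rpow_one_half_sub_one_eq_inv_sqrt (le_of_lt hu), neg_mul, inv_mul_eq_div]

lemma integral_exp_neg_mul_div_sqrt {l : ℝ} (hl : 0 < l) :
    ∫ u in Ioi 0, exp (-(l * u)) / √u = √(π / l) := by
  rw [sqrt_div' _ hl.le, div_eq_inv_mul, ← one_div, ← sqrt_one, ← sqrt_div' _ hl.le,
    sqrt_eq_rpow, ← Gamma_one_half_eq, ← integral_rpow_mul_exp_neg_mul_Ioi one_half_pos hl]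
  refine setIntegral_congr_fun measurableSet_Ioi fun u hu => ?_
  rw [rpow_one_half_sub_one_eq_inv_sqrt (le_of_lt hu), inv_mul_eq_div]

lemma sqrt_two_mul_sub_one_le_sqrt_sq_sub_one {s : ℝ} (hs : 1 ≤ s) :
    √(2 * (s - 1)) ≤ √(s ^ 2 - 1) :=
  sqrt_le_sqrt (by nlinarith)

lemma integral_exp_neg_mul_div_sqrt_sq_sub_one_le {l : ℝ} (hl : 0 < l) :
    ∫ s in Ioi 1, exp (-(l * s)) / √(s ^ 2 - 1) ≤ exp (-l) * √(π / (2 * l)) := by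
  set g : ℝ → ℝ := fun s => exp (-(l * s)) / √(2 * (s - 1))
  have hg_shift : (fun u => g (u + 1)) = fun u => exp (-l) / √2 * (exp (-(l * u)) / √u) := by
    funext u
    simp only [g, add_sub_cancel_right, sqrt_mul zero_le_two, mul_add, mul_one, neg_add, exp_add]
    ring
  have hg_int : IntegrableOn g (Ioi 1) := by
    rw [← zero_add (1 : ℝ), ← integrableOn_Ioi_comp_add_right_iff, hg_shift]
    exact (integrableOn_exp_neg_mul_div_sqrt hl).const_mul _
  have hg_eq : ∫ s in Ioi 1, g s = exp (-l) * √(π / (2 * l)) := by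
    rw [← zero_add (1 : ℝ), ← setIntegral_Ioi_comp_add_right, hg_shift, integral_const_mul,
      integral_exp_neg_mul_div_sqrt hl, mul_comm 2 l, ← div_div, sqrt_div' _ zero_le_two]
    ring
  rw [← hg_eq]
  refine setIntegral_mono_of_nonneg (fun s _ => by positivity) (fun s hs => ?_) hg_int
  exact div_le_div_of_nonneg_left (exp_pos _).le (sqrt_pos.2 (by nlinarith [mem_Ioi.1 hs]))
    (sqrt_two_mul_sub_one_le_sqrt_sq_sub_one hs.le)

/-- for T > 0 and x ≠ 0,
(1/(π√T)) ∫₁^∞ e^{−|x|s/√T}/√(s²−1) ds ≤ e^{−|x|/√T}/√(2π√T|x|). -/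
theorem stmt12 (T x : ℝ) (hT : 0 < T) (hx : x ≠ 0) :
    (1 / (π * Real.sqrt T)) *
        ∫ s in Set.Ioi (1 : ℝ),
          Real.exp (-(|x| * s) / Real.sqrt T) / Real.sqrt (s ^ 2 - 1) ≤
      Real.exp (-|x| / Real.sqrt T) / Real.sqrt (2 * π * Real.sqrt T * |x|) := by
  have hT' : 0 < √T := sqrt_pos.2 hT
  have hx' : 0 < |x| := abs_pos.2 hx
  set l := |x| / √T with hl_def
  have hl : 0 < l := div_pos hx' hT'
  have h_integrand (s : ℝ) : -(|x| * s) / √T = -(l * s) := by rw [hl_def]; ring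
  have h_sqrt : √(π / (2 * l)) = π * √T / √(2 * π * √T * |x|) := by
    rw [← sqrt_sq (by positivity : 0 ≤ π * √T), ← sqrt_div' _ (by positivity)]
    congr 1
    rw [hl_def]
    field_simp
  simp only [h_integrand, neg_div, ← hl_def]
  calc _ ≤ 1 / (π * √T) * (exp (-l) * √(π / (2 * l))) := by
        gcongr; exact integral_exp_neg_mul_div_sqrt_sq_sub_one_le hl
    _ = exp (-l) / √(2 * π * √T * |x|) := by
        rw [h_sqrt]; field_simp
end

section
/- Let d > 0, k ≥ 2 an integer, and x, z ∈ (−d, d). Then ∫_d^{kd} (y − x)^{−1/2}(2kd + z − y)^{−1/2} dy ≤ 2 and ∫_{kd}^{(2k−1)d} (y − x)^{−1/2}(2kd + z − y)^{−1/2} dy ≤ 2; consequently ∫_d^{(2k−1)d} e^{−a(y−x)}(y−x)^{−1/2} e^{−a(2kd+z−y)}(2kd+z−y)^{−1/2} dy ≤ 4 e^{−a(2kd + z − x)} for every a > 0. -/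
/-!
On `[lo, hi]` bound the factor `1 / √(c - y)` by its value at `hi` and integrate `1 / √(y - x)`
exactly: the result `2 (√(hi - x) - √(lo - x)) ≤ 2 √(hi - lo)` (subadditivity of `√`) is at most
`2 √(c - hi)` once the interval is no longer than its distance to the singularity `c`. The
reflection `y ↦ x + c - y` gives the mirror estimate near `x`; with `c = 2kd + z` these apply to
`[d, kd]` and to `[kd, (2k - 1)d]` respectively. In the weighted integral the two exponentials
multiply to the constant `e^{-a(c - x)}`.
-/

open Real intervalIntegral

lemma sqrt_sub_sqrt_le_sqrt_sub (a b : ℝ) : √a - √b ≤ √(a - b) := by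
  rcases le_or_gt b a with hba | hab
  · rcases le_or_gt 0 b with hb | hb
    · rw [sub_le_iff_le_add, Real.sqrt_le_left (by positivity)]
      nlinarith [Real.sq_sqrt hb, Real.sq_sqrt (sub_nonneg.2 hba),
        mul_nonneg (Real.sqrt_nonneg b) (Real.sqrt_nonneg (a - b))]
    · rw [Real.sqrt_eq_zero_of_nonpos hb.le, sub_zero]
      exact Real.sqrt_le_sqrt (by linarith)
  · linarith [Real.sqrt_le_sqrt hab.le, Real.sqrt_nonneg (a - b)]

section

variable {x c lo hi : ℝ}

lemma continuousOn_one_div_sqrt_sub (hx : x < lo) (hlo : lo ≤ hi) :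
    ContinuousOn (fun y => 1 / √(y - x)) (Set.uIcc lo hi) := by
  refine continuousOn_const.div (by fun_prop) fun y hy => ?_
  rw [Set.uIcc_of_le hlo] at hy
  exact (Real.sqrt_pos.2 (by linarith [hy.1])).ne'

lemma intervalIntegrable_one_div_sqrt_mul_sqrt (hx : x < lo) (hlo : lo ≤ hi) (hc : hi < c) :
    IntervalIntegrable (fun y => 1 / (√(y - x) * √(c - y))) MeasureTheory.volume lo hi := by
  refine (continuousOn_const.div (by fun_prop) fun y hy => ?_).intervalIntegrable
  rw [Set.uIcc_of_le hlo] at hy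
  exact mul_ne_zero (Real.sqrt_pos.2 (by linarith [hy.1])).ne'
    (Real.sqrt_pos.2 (by linarith [hy.2])).ne'

lemma integral_one_div_sqrt_sub (hx : x < lo) (hlo : lo ≤ hi) :
    ∫ y in lo..hi, 1 / √(y - x) = 2 * √(hi - x) - 2 * √(lo - x) := by
  refine integral_eq_sub_of_hasDerivAt (f := fun y => 2 * √(y - x)) (fun y hy => ?_)
    (continuousOn_one_div_sqrt_sub hx hlo).intervalIntegrable
  rw [Set.uIcc_of_le hlo] at hy
  have hy : 0 < y - x := by linarith [hy.1]
  refine ((((hasDerivAt_id' y).sub_const x).sqrt hy.ne').const_mul 2).congr_deriv ?_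
  field_simp

theorem integral_one_div_sqrt_mul_sqrt_le_two_of_sub_le_right (hx : x < lo) (hlo : lo ≤ hi)
    (hhi : hi - lo ≤ c - hi) : ∫ y in lo..hi, 1 / (√(y - x) * √(c - y)) ≤ 2 := by
  rcases hlo.eq_or_lt with rfl | hlt
  · simp
  have hc : 0 < √(c - hi) := Real.sqrt_pos.2 (by linarith)
  calc ∫ y in lo..hi, 1 / (√(y - x) * √(c - y))
      ≤ ∫ y in lo..hi, (√(c - hi))⁻¹ * (1 / √(y - x)) := by
        refine integral_mono_on hlo (intervalIntegrable_one_div_sqrt_mul_sqrt hx hlo (by linarith))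
          ((continuousOn_one_div_sqrt_sub hx hlo).intervalIntegrable.const_mul _) fun y hy => ?_
        have hyx : 0 < √(y - x) := Real.sqrt_pos.2 (by linarith [hy.1])
        rw [inv_mul_eq_div, div_div]
        gcongr
        · linarith [hy.2]
    _ = (√(c - hi))⁻¹ * (2 * √(hi - x) - 2 * √(lo - x)) := by
        rw [integral_const_mul, integral_one_div_sqrt_sub hx hlo]
    _ ≤ 2 := by
        have hsub := sqrt_sub_sqrt_le_sqrt_sub (hi - x) (lo - x)
        rw [show hi - x - (lo - x) = hi - lo by ring] at hsub
        rw [inv_mul_le_iff₀ hc]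
        linarith [Real.sqrt_le_sqrt hhi]

/-- The kernel is invariant under the reflection `y ↦ x + c - y`, which swaps its two
singularities. -/
theorem integral_one_div_sqrt_mul_sqrt_le_two_of_sub_le_left (hlo : lo ≤ hi) (hc : hi < c)
    (hhi : hi - lo ≤ lo - x) : ∫ y in lo..hi, 1 / (√(y - x) * √(c - y)) ≤ 2 := by
  have hreflect : ∀ y, 1 / (√(y - x) * √(c - y)) = 1 / (√(x + c - y - x) * √(c - (x + c - y))) :=
    fun y => by rw [show x + c - y - x = c - y by ring, show c - (x + c - y) = y - x by ring,
      mul_comm]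
  rw [integral_congr fun y _ => hreflect y]
  exact (integral_comp_sub_left (fun y => 1 / (√(y - x) * √(c - y))) (x + c)).trans_le
    (integral_one_div_sqrt_mul_sqrt_le_two_of_sub_le_right (by linarith) (by linarith)
      (by linarith))

end

theorem stmt14_general (a d : ℝ) (k : ℕ) (hd : 0 < d) (hk : 2 ≤ k)
    (x z : ℝ) (hx : x ∈ Set.Ioo (-d) d) (hz : z ∈ Set.Ioo (-d) d) :
    (∫ y in d..((k : ℝ) * d),
        1 / (Real.sqrt (y - x) * Real.sqrt (2 * (k : ℝ) * d + z - y)) ≤ 2) ∧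
      (∫ y in ((k : ℝ) * d)..((2 * (k : ℝ) - 1) * d),
          1 / (Real.sqrt (y - x) * Real.sqrt (2 * (k : ℝ) * d + z - y)) ≤ 2) ∧
        ∫ y in d..((2 * (k : ℝ) - 1) * d),
            Real.exp (-a * (y - x)) / Real.sqrt (y - x) *
              (Real.exp (-a * (2 * (k : ℝ) * d + z - y)) /
                Real.sqrt (2 * (k : ℝ) * d + z - y)) ≤
          4 * Real.exp (-a * (2 * (k : ℝ) * d + z - x)) := by
  have hk : (2 : ℝ) ≤ k := by exact_mod_cast hk
  have hfirst := integral_one_div_sqrt_mul_sqrt_le_two_of_sub_le_right (c := 2 * k * d + z)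
    (hi := k * d) hx.2 (by nlinarith) (by nlinarith [hz.1])
  have hsecond := integral_one_div_sqrt_mul_sqrt_le_two_of_sub_le_left (x := x)
    (c := 2 * k * d + z) (lo := k * d) (hi := (2 * k - 1) * d) (by nlinarith) (by linarith [hz.1])
    (by nlinarith [hx.2])
  refine ⟨hfirst, hsecond, ?_⟩
  have hfactor : ∀ y, exp (-a * (y - x)) / √(y - x) *
      (exp (-a * (2 * k * d + z - y)) / √(2 * k * d + z - y)) =
      exp (-a * (2 * k * d + z - x)) * (1 / (√(y - x) * √(2 * k * d + z - y))) := fun y => by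
    rw [div_mul_div_comm, ← exp_add, mul_one_div]
    ring_nf
  simp_rw [hfactor]
  rw [integral_const_mul, ← integral_add_adjacent_intervals
    (intervalIntegrable_one_div_sqrt_mul_sqrt (hi := k * d) hx.2 (by nlinarith)
      (by nlinarith [hz.1]))
    (intervalIntegrable_one_div_sqrt_mul_sqrt (lo := k * d) (hi := (2 * k - 1) * d)
      (by nlinarith [hx.2]) (by nlinarith) (by linarith [hz.1]))]
  nlinarith [exp_pos (-a * (2 * k * d + z - x))]

/-- middle-range convolution estimates I_{k,2}. -/
theorem stmt14 (a d : ℝ) (k : ℕ) (hd : 0 < d) (hk : 2 ≤ k) (ha : 0 < a)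
    (x z : ℝ) (hx : x ∈ Set.Ioo (-d) d) (hz : z ∈ Set.Ioo (-d) d) :
    (∫ y in d..((k : ℝ) * d),
        1 / (Real.sqrt (y - x) * Real.sqrt (2 * (k : ℝ) * d + z - y)) ≤ 2) ∧
      (∫ y in ((k : ℝ) * d)..((2 * (k : ℝ) - 1) * d),
          1 / (Real.sqrt (y - x) * Real.sqrt (2 * (k : ℝ) * d + z - y)) ≤ 2) ∧
        ∫ y in d..((2 * (k : ℝ) - 1) * d),
            Real.exp (-a * (y - x)) / Real.sqrt (y - x) *
              (Real.exp (-a * (2 * (k : ℝ) * d + z - y)) /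
                Real.sqrt (2 * (k : ℝ) * d + z - y)) ≤
          4 * Real.exp (-a * (2 * (k : ℝ) * d + z - x)) :=
  stmt14_general a d k hd hk x z hx hz
end

section
/- Let d ≥ 1, a > 0 and x ∈ (d − 1, d]. Then ∫_{ℝ∖(−d,d)} e^{−2a|y−x|}/|y − x| dy ≤ e^{−2ad} cosh(2ax)/a + ln(d + 1 − x) − ln(d − x). -/
open Real MeasureTheory Set

/-!
Split the exterior of `(-d, d)` into `(-∞, -d]`, `[d, d + 1]` and `(d + 1, ∞)`. On the two outer
pieces `|y - x| ≥ 1` (on the left because `x + d > 2d - 1 ≥ 1`), so the factor `1 / |y - x|` can be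
dropped; the exponential tails then integrate to `e^{-2a(x+d)} / 2a` and
`e^{-2a(d+1-x)} / 2a ≤ e^{-2a(d-x)} / 2a`, which add up to `e^{-2ad} cosh(2ax) / a`. On `[d, d + 1]`
the exponential is at most `1`, and `1 / (y - x)` integrates to `log (d + 1 - x) - log (d - x)`.
-/

lemma Set.compl_Ioo {α : Type*} [LinearOrder α] (a b : α) : (Ioo a b)ᶜ = Iic a ∪ Ici b := by
  ext y
  simp only [mem_compl_iff, mem_Ioo, not_and_or, not_lt, mem_union, mem_Iic, mem_Ici]

lemma one_le_abs_sub_of_Iic {x c y : ℝ} (hc : c + 1 ≤ x) (hy : y ∈ Iic c) : 1 ≤ |y - x| := by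
  rw [abs_sub_comm]
  exact le_abs.2 (Or.inl (by linarith [mem_Iic.1 hy]))

lemma one_le_abs_sub_of_Ioi {x c y : ℝ} (hc : x + 1 ≤ c) (hy : y ∈ Ioi c) : 1 ≤ |y - x| :=
  le_abs.2 (Or.inl (by linarith [mem_Ioi.1 hy]))

section ExpKernel

variable {b x : ℝ}

lemma exp_mul_abs_sub_of_le {y : ℝ} (h : y ≤ x) :
    exp (b * |y - x|) = exp (b * x) * exp (-b * y) := by
  rw [abs_of_nonpos (sub_nonpos.2 h), ← exp_add]
  ring_nf

lemma exp_mul_abs_sub_of_ge {y : ℝ} (h : x ≤ y) :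
    exp (b * |y - x|) = exp (-b * x) * exp (b * y) := by
  rw [abs_of_nonneg (sub_nonneg.2 h), ← exp_add]
  ring_nf

lemma integrableOn_exp_mul_abs_sub_Iic (hb : b < 0) {c : ℝ} (hc : c ≤ x) :
    IntegrableOn (fun y => exp (b * |y - x|)) (Iic c) :=
  IntegrableOn.congr_fun ((integrableOn_exp_mul_Iic (neg_pos.2 hb) c).const_mul _)
    (fun _ hy => (exp_mul_abs_sub_of_le ((mem_Iic.1 hy).trans hc)).symm) measurableSet_Iic

lemma integral_exp_mul_abs_sub_Iic (hb : b < 0) {c : ℝ} (hc : c ≤ x) :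
    ∫ y in Iic c, exp (b * |y - x|) = exp (b * (x - c)) / -b := by
  rw [setIntegral_congr_fun measurableSet_Iic
      (fun _ hy => exp_mul_abs_sub_of_le ((mem_Iic.1 hy).trans hc)),
    integral_const_mul, integral_exp_mul_Iic (neg_pos.2 hb), mul_div_assoc', ← exp_add]
  ring_nf

lemma integrableOn_exp_mul_abs_sub_Ioi (hb : b < 0) {c : ℝ} (hc : x ≤ c) :
    IntegrableOn (fun y => exp (b * |y - x|)) (Ioi c) :=
  IntegrableOn.congr_fun ((integrableOn_exp_mul_Ioi hb c).const_mul _)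
    (fun _ hy => (exp_mul_abs_sub_of_ge (hc.trans (mem_Ioi.1 hy).le)).symm) measurableSet_Ioi

lemma integral_exp_mul_abs_sub_Ioi (hb : b < 0) {c : ℝ} (hc : x ≤ c) :
    ∫ y in Ioi c, exp (b * |y - x|) = exp (b * (c - x)) / -b := by
  rw [setIntegral_congr_fun measurableSet_Ioi
      (fun _ hy => exp_mul_abs_sub_of_ge (hc.trans (mem_Ioi.1 hy).le)),
    integral_const_mul, integral_exp_mul_Ioi hb, div_neg, neg_div, mul_neg, mul_div_assoc',
    ← exp_add]
  ring_nf

lemma exp_mul_abs_sub_div_abs_le {y : ℝ} (h : 1 ≤ |y - x|) :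
    exp (b * |y - x|) / |y - x| ≤ exp (b * |y - x|) :=
  div_le_self (exp_pos _).le h

lemma integrableOn_exp_mul_abs_sub_div_abs_of_one_le {s : Set ℝ} (hs : MeasurableSet s)
    (h : ∀ y ∈ s, 1 ≤ |y - x|) (hint : IntegrableOn (fun y => exp (b * |y - x|)) s) :
    IntegrableOn (fun y => exp (b * |y - x|) / |y - x|) s := by
  refine hint.mono' (Measurable.aestronglyMeasurable (by fun_prop)) ?_
  filter_upwards [ae_restrict_mem hs] with y hy
  rw [norm_of_nonneg (by positivity)]
  exact exp_mul_abs_sub_div_abs_le (h y hy)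

lemma setIntegral_exp_mul_abs_sub_div_abs_le_of_one_le {s : Set ℝ} (hs : MeasurableSet s)
    (h : ∀ y ∈ s, 1 ≤ |y - x|) (hint : IntegrableOn (fun y => exp (b * |y - x|)) s) :
    ∫ y in s, exp (b * |y - x|) / |y - x| ≤ ∫ y in s, exp (b * |y - x|) :=
  setIntegral_mono_on (integrableOn_exp_mul_abs_sub_div_abs_of_one_le hs h hint) hint hs
    fun y hy => exp_mul_abs_sub_div_abs_le (h y hy)

lemma integrableOn_exp_mul_abs_sub_div_abs_Iic (hb : b < 0) {c : ℝ} (hc : c + 1 ≤ x) :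
    IntegrableOn (fun y => exp (b * |y - x|) / |y - x|) (Iic c) :=
  integrableOn_exp_mul_abs_sub_div_abs_of_one_le measurableSet_Iic
    (fun y hy => one_le_abs_sub_of_Iic hc hy) (integrableOn_exp_mul_abs_sub_Iic hb (by linarith))

lemma setIntegral_exp_mul_abs_sub_div_abs_Iic_le (hb : b < 0) {c : ℝ} (hc : c + 1 ≤ x) :
    ∫ y in Iic c, exp (b * |y - x|) / |y - x| ≤ exp (b * (x - c)) / -b :=
  integral_exp_mul_abs_sub_Iic hb (x := x) (c := c) (by linarith) ▸
    setIntegral_exp_mul_abs_sub_div_abs_le_of_one_le measurableSet_Iic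
      (fun y hy => one_le_abs_sub_of_Iic hc hy) (integrableOn_exp_mul_abs_sub_Iic hb (by linarith))

lemma integrableOn_exp_mul_abs_sub_div_abs_Ioi (hb : b < 0) {c : ℝ} (hc : x + 1 ≤ c) :
    IntegrableOn (fun y => exp (b * |y - x|) / |y - x|) (Ioi c) :=
  integrableOn_exp_mul_abs_sub_div_abs_of_one_le measurableSet_Ioi
    (fun y hy => one_le_abs_sub_of_Ioi hc hy) (integrableOn_exp_mul_abs_sub_Ioi hb (by linarith))

lemma setIntegral_exp_mul_abs_sub_div_abs_Ioi_le (hb : b < 0) {c : ℝ} (hc : x + 1 ≤ c) :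
    ∫ y in Ioi c, exp (b * |y - x|) / |y - x| ≤ exp (b * (c - x)) / -b :=
  integral_exp_mul_abs_sub_Ioi hb (x := x) (c := c) (by linarith) ▸
    setIntegral_exp_mul_abs_sub_div_abs_le_of_one_le measurableSet_Ioi
      (fun y hy => one_le_abs_sub_of_Ioi hc hy) (integrableOn_exp_mul_abs_sub_Ioi hb (by linarith))

lemma integrableOn_exp_mul_abs_sub_div_abs_Icc {c e : ℝ} (hxc : x < c) :
    IntegrableOn (fun y => exp (b * |y - x|) / |y - x|) (Icc c e) := by
  refine ContinuousOn.integrableOn_Icc (ContinuousOn.div (by fun_prop) (by fun_prop) ?_)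
  intro y hy
  exact abs_ne_zero.2 (sub_ne_zero.2 (hxc.trans_le hy.1).ne')

lemma setIntegral_exp_mul_abs_sub_div_abs_Icc_le (hb : b ≤ 0) {c e : ℝ} (hxc : x < c)
    (hce : c ≤ e) :
    ∫ y in Icc c e, exp (b * |y - x|) / |y - x| ≤ log (e - x) - log (c - x) := by
  have hinv : IntegrableOn (fun y => (y - x)⁻¹) (Icc c e) :=
    ((continuousOn_id.sub continuousOn_const).inv₀
      fun y hy => (sub_pos.2 (hxc.trans_le hy.1)).ne').integrableOn_Icc
  calc ∫ y in Icc c e, exp (b * |y - x|) / |y - x|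
      ≤ ∫ y in Icc c e, (y - x)⁻¹ := by
        refine setIntegral_mono_on (integrableOn_exp_mul_abs_sub_div_abs_Icc hxc) hinv
          measurableSet_Icc fun y hy => ?_
        have hyx : 0 < y - x := sub_pos.2 (hxc.trans_le hy.1)
        rw [abs_of_pos hyx, div_eq_mul_inv]
        exact mul_le_of_le_one_left (inv_nonneg.2 hyx.le)
          (exp_le_one_iff.2 (mul_nonpos_of_nonpos_of_nonneg hb hyx.le))
    _ = log (e - x) - log (c - x) := by
        have hcx : 0 < c - x := sub_pos.2 hxc
        rw [integral_Icc_eq_integral_Ioc, ← intervalIntegral.integral_of_le hce,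
          intervalIntegral.integral_comp_sub_right (fun u => u⁻¹) x,
          integral_inv (notMem_uIcc_of_lt hcx (by linarith)), log_div (by linarith) hcx.ne']

lemma not_integrableOn_exp_mul_abs_sub_div_abs_Ioc :
    ¬ IntegrableOn (fun y => exp (b * |y - x|) / |y - x|) (Ioc x (x + 1)) := by
  intro h
  have hinv : IntegrableOn (fun y => (y - x)⁻¹) (Ioc x (x + 1)) := by
    refine (h.const_mul (exp |b|)).mono' ((measurable_id.sub_const x).inv.aestronglyMeasurable)
      ?_
    filter_upwards [ae_restrict_mem measurableSet_Ioc] with y ⟨hxy, hyx⟩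
    have hyx' : 0 < y - x := sub_pos.2 hxy
    have hexp : 1 ≤ exp |b| * exp (b * (y - x)) := by
      rw [← exp_add, one_le_exp_iff]
      nlinarith [neg_abs_le b, le_abs_self b]
    rw [norm_of_nonneg (inv_nonneg.2 hyx'.le), abs_of_pos hyx', mul_div_assoc', le_div_iff₀ hyx']
    simpa [inv_mul_cancel₀ hyx'.ne'] using hexp
  have := intervalIntegrable_sub_inv_iff.1
    ((intervalIntegrable_iff_integrableOn_Ioc_of_le (by linarith)).2 hinv)
  simp at this

end ExpKernel

lemma exp_tails_le_exp_mul_cosh {a : ℝ} (ha : 0 < a) (d x : ℝ) :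
    exp (-2 * a * (x - -d)) / -(-2 * a) + exp (-2 * a * (d + 1 - x)) / -(-2 * a) ≤
      exp (-2 * a * d) * cosh (2 * a * x) / a := by
  have hcosh : exp (-2 * a * d) * cosh (2 * a * x) / a
      = exp (-2 * a * (x - -d)) / -(-2 * a) + exp (-2 * a * (d - x)) / -(-2 * a) := by
    rw [cosh_eq, ← sub_eq_zero]
    field_simp
    rw [mul_add, ← exp_add, ← exp_add]
    ring_nf
  have hexp : exp (-2 * a * (d + 1 - x)) ≤ exp (-2 * a * (d - x)) := exp_le_exp.2 (by nlinarith)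
  rw [hcosh]
  gcongr
  linarith

/-- exterior integral estimate for x near the boundary, with a
logarithmic contribution. -/
theorem stmt16 (a d : ℝ) (ha : 0 < a) (hd : 1 ≤ d)
    (x : ℝ) (hx : x ∈ Set.Ioc (d - 1) d) :
    ∫ y in (Set.Ioo (-d) d)ᶜ, Real.exp (-2 * a * |y - x|) / |y - x| ≤
      Real.exp (-2 * a * d) * Real.cosh (2 * a * x) / a +
        (Real.log (d + 1 - x) - Real.log (d - x)) := by
  obtain ⟨hdx, hxd⟩ := hx
  have hb : -2 * a < 0 := by linarith
  rcases hxd.lt_or_eq with hxd | rfl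
  · have hL : -d + 1 ≤ x := by linarith
    have hR : x + 1 ≤ d + 1 := by linarith
    have hfM := integrableOn_exp_mul_abs_sub_div_abs_Icc (b := -2 * a) (e := d + 1) hxd
    have hfR := integrableOn_exp_mul_abs_sub_div_abs_Ioi hb hR
    have hsplit : Icc d (d + 1) ∪ Ioi (d + 1) = Ici d := Icc_union_Ioi_eq_Ici (by linarith)
    have hdisj : Disjoint (Icc d (d + 1)) (Ioi (d + 1)) :=
      disjoint_left.2 fun _ hy => not_lt.2 hy.2
    rw [compl_Ioo, setIntegral_union (Ici_disjoint_Iic.2 (by linarith)).symm measurableSet_Ici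
        (integrableOn_exp_mul_abs_sub_div_abs_Iic hb hL) (hsplit ▸ hfM.union hfR), ← hsplit,
      setIntegral_union hdisj measurableSet_Ioi hfM hfR]
    linarith [setIntegral_exp_mul_abs_sub_div_abs_Iic_le hb hL,
      setIntegral_exp_mul_abs_sub_div_abs_Icc_le hb.le hxd (le_add_of_nonneg_right zero_le_one),
      setIntegral_exp_mul_abs_sub_div_abs_Ioi_le hb hR, exp_tails_le_exp_mul_cosh ha d x]
  · -- For `x = d` the integral is the junk value `0` of a non-integrable function and `log 0 = 0`.
    have hsub : Ioc x (x + 1) ⊆ (Ioo (-x) x)ᶜ := by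
      rw [compl_Ioo]; exact fun y hy => Or.inr (mem_Ici.2 hy.1.le)
    rw [integral_undef fun h => not_integrableOn_exp_mul_abs_sub_div_abs_Ioc
        (IntegrableOn.mono_set h hsub),
      add_sub_cancel_left, sub_self, log_one, log_zero, sub_zero, add_zero]
    positivity
end

section
/- Let H₁, H₂ be Banach spaces, F : H₁ → H₂ Fréchet differentiable, A : H₂ → H₁ an injective bounded linear operator, u₀ ∈ H₁, and let Y₀, Z₁, Z₂ ≥ 0 and r > 0 satisfy ‖A F(u₀)‖ ≤ Y₀, ‖Id − A DF(u₀)‖ ≤ Z₁, ‖A(DF(v) − DF(u₀))‖ ≤ Z₂ r for all v in the closed ball of radius r around u₀, and Z₂ r² − (1 − Z₁) r + Y₀ < 0. Then there exists a unique ũ in the closed ball of radius r around u₀ with F(ũ) = 0. -/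
/-- Newton–Kantorovich / radii polynomial theorem. -/
theorem stmt18 {X Y : Type*} [NormedAddCommGroup X] [NormedSpace ℝ X] [CompleteSpace X]
    [NormedAddCommGroup Y] [NormedSpace ℝ Y]
    (F : X → Y) (DF : X → X →L[ℝ] Y) (hF : ∀ u : X, HasFDerivAt F (DF u) u)
    (A : Y →L[ℝ] X) (hA : Function.Injective (⇑A))
    (u₀ : X) (Y₀ Z₁ Z₂ r : ℝ) (hY₀ : 0 ≤ Y₀) (hZ₁ : 0 ≤ Z₁) (hZ₂ : 0 ≤ Z₂)
    (hr : 0 < r)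
    (hb1 : ‖A (F u₀)‖ ≤ Y₀)
    (hb2 : ‖ContinuousLinearMap.id ℝ X - A.comp (DF u₀)‖ ≤ Z₁)
    (hb3 : ∀ v ∈ Metric.closedBall u₀ r, ‖A.comp (DF v - DF u₀)‖ ≤ Z₂ * r)
    (hrad : Z₂ * r ^ 2 - (1 - Z₁) * r + Y₀ < 0) :
    ∃! u : X, u ∈ Metric.closedBall u₀ r ∧ F u = 0 := by
  set T : X → X := fun u => u - A (F u) with hT
  set κ : ℝ := Z₁ + Z₂ * r with hκdef
  have hκ0 : 0 ≤ κ := by positivity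
  have hkey : κ * r + Y₀ < r := by nlinarith
  have hκ1 : κ < 1 := by nlinarith
  have hderiv : ∀ x, HasFDerivAt T (ContinuousLinearMap.id ℝ X - A.comp (DF x)) x := by
    intro x
    exact (hasFDerivAt_id x).sub ((A.hasFDerivAt).comp x (hF x))
  have hbound : ∀ x ∈ Metric.closedBall u₀ r,
      ‖ContinuousLinearMap.id ℝ X - A.comp (DF x)‖ ≤ κ := by
    intro x hx
    have h3 := hb3 x hx
    rw [ContinuousLinearMap.comp_sub] at h3
    calc ‖ContinuousLinearMap.id ℝ X - A.comp (DF x)‖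
        = ‖(ContinuousLinearMap.id ℝ X - A.comp (DF u₀))
            - (A.comp (DF x) - A.comp (DF u₀))‖ := by congr 1; abel
      _ ≤ ‖ContinuousLinearMap.id ℝ X - A.comp (DF u₀)‖
            + ‖A.comp (DF x) - A.comp (DF u₀)‖ := norm_sub_le _ _
      _ ≤ κ := add_le_add hb2 h3
  have hlip : ∀ x ∈ Metric.closedBall u₀ r, ∀ y ∈ Metric.closedBall u₀ r,
      ‖T y - T x‖ ≤ κ * ‖y - x‖ := by
    intro x hx y hy
    exact (convex_closedBall u₀ r).norm_image_sub_le_of_norm_hasFDerivWithin_le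
      (fun z _ => (hderiv z).hasFDerivWithinAt) hbound hx hy
  have hmem₀ : u₀ ∈ Metric.closedBall u₀ r := Metric.mem_closedBall_self hr.le
  have hmaps : ∀ x ∈ Metric.closedBall u₀ r, T x ∈ Metric.closedBall u₀ r := by
    intro x hx
    rw [Metric.mem_closedBall, dist_eq_norm]
    have h1 : ‖T x - T u₀‖ ≤ κ * ‖x - u₀‖ := hlip u₀ hmem₀ x hx
    have h2 : ‖T u₀ - u₀‖ ≤ Y₀ := by
      have : T u₀ - u₀ = -(A (F u₀)) := by simp [hT]
      rw [this, norm_neg]; exact hb1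
    have hxr : ‖x - u₀‖ ≤ r := by rwa [Metric.mem_closedBall, dist_eq_norm] at hx
    calc ‖T x - u₀‖ = ‖(T x - T u₀) + (T u₀ - u₀)‖ := by congr 1; abel
      _ ≤ ‖T x - T u₀‖ + ‖T u₀ - u₀‖ := norm_add_le _ _
      _ ≤ κ * r + Y₀ := add_le_add (h1.trans (by nlinarith [norm_nonneg (x - u₀)])) h2
      _ ≤ r := hkey.le
  haveI : Nonempty (Metric.closedBall u₀ r) := ⟨⟨u₀, hmem₀⟩⟩
  haveI : CompleteSpace (Metric.closedBall u₀ r) :=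
    (Metric.isClosed_closedBall (x := u₀) (ε := r)).completeSpace_coe
  set f : Metric.closedBall u₀ r → Metric.closedBall u₀ r :=
    fun x => ⟨T x.1, hmaps x.1 x.2⟩ with hf
  have hc : ContractingWith κ.toNNReal f := by
    constructor
    · exact_mod_cast (by rwa [Real.coe_toNNReal κ hκ0] : (κ.toNNReal : ℝ) < 1)
    · apply LipschitzWith.of_dist_le_mul
      intro x y
      rw [Subtype.dist_eq, Subtype.dist_eq, dist_eq_norm, dist_eq_norm,
        Real.coe_toNNReal κ hκ0]
      exact hlip y.1 y.2 x.1 x.2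
  set u : Metric.closedBall u₀ r := ContractingWith.fixedPoint f hc with hu
  have hfix : T u.1 = u.1 := congrArg Subtype.val (hc.fixedPoint_isFixedPt)
  have hFu : F u.1 = 0 := by
    apply hA
    have : A (F u.1) = 0 := by
      have := hfix
      simp only [hT] at this
      have : u.1 - A (F u.1) - u.1 = (0 : X) := by rw [this]; abel
      linear_combination (norm := abel) -this
    simpa using this
  refine ⟨u.1, ⟨u.2, hFu⟩, ?_⟩
  rintro v ⟨hv, hFv⟩
  have hTv : T v = v := by simp [hT, hFv]
  have h := hlip u.1 u.2 v hv
  rw [hTv, hfix] at h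
  have : ‖v - u.1‖ ≤ 0 := by nlinarith [norm_nonneg (v - u.1)]
  have := le_antisymm this (norm_nonneg _)
  exact sub_eq_zero.mp (norm_eq_zero.mp this)
end
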